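/- Let f : H → G be a homomorphism of Hilbert algebras. For an upset U of X(H), define ĝ(U) = {P ∈ X(G) : every Q ∈ X(H) with f⁻¹(P) ⊆ Q satisfies Q ∈ U}. Then: (i) ĝ(U) is an upset of X(G) for every upset U of X(H); (ii) ĝ(X(H)) = X(G); (iii) ĝ(U ∩ V) = ĝ(U) ∩ ĝ(V) for all upsets U, V of X(H); and (iv) ĝ(U ⇒ V) = ĝ(U) ⇒ ĝ(V) for all upsets U, V of X(H). -/

import Mathlib

/-- A Hilbert algebra `(H, →, 1)`. -/
structure HilbertAlgebra (H : Type*) where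
  imp : H → H → H
  one : H
  ax1 : ∀ a b : H, imp a (imp b a) = one
  ax2 : ∀ a b c : H, imp (imp a (imp b c)) (imp (imp a b) (imp a c)) = one
  ax3 : ∀ a b : H, imp a b = one → imp b a = one → a = b

namespace HilbertAlgebra

variable {H : Type*} (hH : HilbertAlgebra H)

/-- The natural order: `a ≤ b` iff `a → b = 1`. -/
def le (a b : H) : Prop := hH.imp a b = hH.one

/-- Implicative filter. -/
def IsImplicativeFilter (F : Set H) : Prop :=
  hH.one ∈ F ∧ ∀ a b : H, a ∈ F → hH.imp a b ∈ F → b ∈ F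

/-- Irreducible implicative filter. -/
def IsIrreducible (F : Set H) : Prop :=
  hH.IsImplicativeFilter F ∧ F ≠ Set.univ ∧
    ∀ F₁ F₂ : Set H, hH.IsImplicativeFilter F₁ → hH.IsImplicativeFilter F₂ →
      F = F₁ ∩ F₂ → (F = F₁ ∨ F = F₂)

/-- Order-ideal: nonempty, downward closed, up-directed (w.r.t. the natural order). -/
def IsOrderIdeal (I : Set H) : Prop :=
  I.Nonempty ∧ (∀ a b : H, b ∈ I → hH.le a b → a ∈ I) ∧
    ∀ a b : H, a ∈ I → b ∈ I → ∃ c ∈ I, hH.le a c ∧ hH.le b c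

/-- `φ(a) = {P ∈ X(H) : a ∈ P}`. -/
def phi (a : H) : Set (Set H) := {P | hH.IsIrreducible P ∧ a ∈ P}

/-- An upset of `X(H)` (the poset of irreducible implicative filters, ordered by `⊆`). -/
def IsUpsetX (U : Set (Set H)) : Prop :=
  (∀ P ∈ U, hH.IsIrreducible P) ∧
    ∀ P Q : Set H, P ∈ U → hH.IsIrreducible Q → P ⊆ Q → Q ∈ U

/-- The Heyting implication `U ⇒ V` on upsets of `X(H)`. -/
def impUps (U V : Set (Set H)) : Set (Set H) :=
  {P | hH.IsIrreducible P ∧ ∀ Q : Set H, hH.IsIrreducible Q → P ⊆ Q → Q ∈ U → Q ∈ V}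

/-- `FC(H)`: finite nonempty intersections of sets of the form `φ(a)`. -/
def FC : Set (Set (Set H)) :=
  {U | ∃ l : List H, l ≠ [] ∧ U = ⋂ a ∈ l, hH.phi a}

/-- `X*(H)`: implicative filters that are intersections of finitely many (at least one)
irreducible implicative filters. -/
def XStar : Set (Set H) :=
  {F | ∃ S : Set (Set H), S.Finite ∧ S.Nonempty ∧ (∀ P ∈ S, hH.IsIrreducible P) ∧ F = ⋂₀ S}

/-- `Φ(a) = {F ∈ X*(H) : a ∈ F}`. -/
def Phi (a : H) : Set (Set H) := {F | F ∈ hH.XStar ∧ a ∈ F}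

/-- An upset of `X*(H)` (ordered by `⊆`). -/
def IsUpsetXStar (U : Set (Set H)) : Prop :=
  (∀ F ∈ U, F ∈ hH.XStar) ∧
    ∀ F K : Set H, F ∈ U → K ∈ hH.XStar → F ⊆ K → K ∈ U

/-- The implication `U ⇒ V` on upsets of `X*(H)`. -/
def impUpsStar (U V : Set (Set H)) : Set (Set H) :=
  {F | F ∈ hH.XStar ∧ ∀ K : Set H, K ∈ hH.XStar → F ⊆ K → K ∈ U → K ∈ V}

/-- Homomorphism of Hilbert algebras. -/
def IsHom {G : Type*} (hG : HilbertAlgebra G) (f : H → G) : Prop :=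
  f hH.one = hG.one ∧ ∀ a b : H, f (hH.imp a b) = hG.imp (f a) (f b)

end HilbertAlgebra

/-- A Hilbert algebra with supremum: `(H, ∨)` is a join-semilattice whose induced
order has greatest element `1`, and `a → b = 1` iff `a ∨ b = b`. -/
structure HilbertSup (H : Type*) extends HilbertAlgebra H where
  sup : H → H → H
  sup_comm : ∀ a b : H, sup a b = sup b a
  sup_assoc : ∀ a b c : H, sup (sup a b) c = sup a (sup b c)
  sup_idem : ∀ a : H, sup a a = a
  sup_one : ∀ a : H, sup a one = one
  imp_eq_one_iff : ∀ a b : H, imp a b = one ↔ sup a b = b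

/-- Morphism of Hilbert algebras with supremum. -/
def HilbertSup.IsHomSup {H G : Type*} (hH : HilbertSup H) (hG : HilbertSup G)
    (f : H → G) : Prop :=
  hH.toHilbertAlgebra.IsHom hG.toHilbertAlgebra f ∧
    ∀ a b : H, f (hH.sup a b) = hG.sup (f a) (f b)

/-- An implicative semilattice: a meet-semilattice with greatest element and a binary
operation `him` such that `a ⊓ b ≤ c ↔ a ≤ him b c`. -/
class ImplicativeSemilattice (G : Type*) extends SemilatticeInf G, OrderTop G where
  him : G → G → G
  inf_le_iff_le_him : ∀ a b c : G, a ⊓ b ≤ c ↔ a ≤ him b c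

/-- `ĝ(U) = {P ∈ X(G) : every Q ∈ X(H) with f⁻¹(P) ⊆ Q satisfies Q ∈ U}`. -/
def ghat {H G : Type*} (hH : HilbertAlgebra H) (hG : HilbertAlgebra G) (f : H → G)
    (U : Set (Set H)) : Set (Set G) :=
  {P | hG.IsIrreducible P ∧ ∀ Q : Set H, hH.IsIrreducible Q → f ⁻¹' P ⊆ Q → Q ∈ U}

/-!
Parts (i)–(iii) unfold directly from the definition of `ĝ`. The inclusion
`ĝ(U) ⇒ ĝ(V) ⊆ ĝ(U ⇒ V)` in (iv) rests on an extension property of homomorphisms: if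
`P` is an implicative filter of `G` and `Q ∈ X(H)` contains `f⁻¹(P)`, then some
`M ∈ X(G)` contains `P` and satisfies `f⁻¹(M) = Q`. Zorn gives an `M ⊇ P` maximal among
the implicative filters whose preimage lies in `Q`. For `z ∉ M` the filter
`{x | z → x ∈ M}` strictly extends `M`, so by maximality it contains some `f c` with
`c ∉ Q`; from this one gets `f(Q) ⊆ M`, and irreducibility of `M` follows from that of `Q`.
-/

namespace HilbertAlgebra

variable {H : Type*} (hH : HilbertAlgebra H)

theorem imp_self (a : H) : hH.imp a a = hH.one := by
  have h₁ := hH.ax2 a (hH.imp a a) a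
  rw [hH.ax1 a (hH.imp a a), hH.ax1 a a] at h₁
  have h₂ := hH.ax1 (hH.imp hH.one (hH.imp a a)) hH.one
  rw [h₁] at h₂
  have h₃ := hH.ax3 _ _ h₂ h₁
  have h₄ := hH.ax1 (hH.imp a a) hH.one
  rw [h₃] at h₄
  exact hH.ax3 _ _ h₄ h₃

theorem imp_one (a : H) : hH.imp a hH.one = hH.one := by
  have h := hH.ax1 a a
  rwa [hH.imp_self] at h

variable {hH}

namespace IsImplicativeFilter

variable {F : Set H} {a b c : H}

theorem mem_of_imp_eq_one (hF : hH.IsImplicativeFilter F) (ha : a ∈ F)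
    (h : hH.imp a b = hH.one) : b ∈ F :=
  hF.2 a b ha (h ▸ hF.1)

theorem imp_mem (hF : hH.IsImplicativeFilter F) (hb : b ∈ F) (a : H) : hH.imp a b ∈ F :=
  hF.mem_of_imp_eq_one hb (hH.ax1 b a)

theorem imp_imp_mem (hF : hH.IsImplicativeFilter F) (h : hH.imp a (hH.imp b c) ∈ F) :
    hH.imp (hH.imp a b) (hH.imp a c) ∈ F :=
  hF.mem_of_imp_eq_one h (hH.ax2 a b c)

theorem imp_trans (hF : hH.IsImplicativeFilter F) (hab : hH.imp a b ∈ F)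
    (hbc : hH.imp b c ∈ F) : hH.imp a c ∈ F :=
  hF.2 _ _ hab (hF.imp_imp_mem (hF.imp_mem hbc a))

theorem setOf_imp_mem (hF : hH.IsImplicativeFilter F) (a : H) :
    hH.IsImplicativeFilter {x | hH.imp a x ∈ F} := by
  refine ⟨?_, fun x y hx hxy => hF.2 _ _ hx (hF.imp_imp_mem hxy)⟩
  show hH.imp a hH.one ∈ F
  rw [hH.imp_one]
  exact hF.1

theorem subset_setOf_imp_mem (hF : hH.IsImplicativeFilter F) (a : H) :
    F ⊆ {x | hH.imp a x ∈ F} :=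
  fun _ hx => hF.imp_mem hx a

theorem mem_setOf_imp_mem_self (hF : hH.IsImplicativeFilter F) (a : H) :
    a ∈ {x | hH.imp a x ∈ F} := by
  show hH.imp a a ∈ F
  rw [hH.imp_self]
  exact hF.1

end IsImplicativeFilter

theorem isImplicativeFilter_sUnion {C : Set (Set H)}
    (hC : ∀ F ∈ C, hH.IsImplicativeFilter F) (hchain : IsChain (· ⊆ ·) C)
    (hne : C.Nonempty) : hH.IsImplicativeFilter (⋃₀ C) := by
  obtain ⟨F₀, hF₀⟩ := hne
  refine ⟨⟨F₀, hF₀, (hC F₀ hF₀).1⟩, ?_⟩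
  rintro a b ⟨F₁, hF₁, ha⟩ ⟨F₂, hF₂, hab⟩
  rcases hchain.total hF₁ hF₂ with h | h
  · exact ⟨F₂, hF₂, (hC F₂ hF₂).2 a b (h ha) hab⟩
  · exact ⟨F₁, hF₁, (hC F₁ hF₁).2 a b ha (h hab)⟩

theorem IsIrreducible.exists_notMem_imp_mem_and_imp_mem {Q : Set H} (hQ : hH.IsIrreducible Q)
    {a b : H} (ha : a ∉ Q) (hb : b ∉ Q) :
    ∃ c ∉ Q, hH.imp a c ∈ Q ∧ hH.imp b c ∈ Q := by
  by_contra! hcon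
  have hQF := hQ.1
  have heq : Q = {x | hH.imp a x ∈ Q} ∩ {x | hH.imp b x ∈ Q} := by
    refine Set.Subset.antisymm
      (Set.subset_inter (hQF.subset_setOf_imp_mem a) (hQF.subset_setOf_imp_mem b)) ?_
    rintro c ⟨hac, hbc⟩
    by_contra hc
    exact hcon c hc hac hbc
  rcases hQ.2.2 _ _ (hQF.setOf_imp_mem a) (hQF.setOf_imp_mem b) heq with h | h
  · exact ha (h ▸ hQF.mem_setOf_imp_mem_self a)
  · exact hb (h ▸ hQF.mem_setOf_imp_mem_self b)

section Extension

variable {G : Type*} {hG : HilbertAlgebra G} {f : H → G} {Q : Set H} {M : Set G}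

theorem exists_imp_mem_of_maximal
    (hM : Maximal (fun F => hG.IsImplicativeFilter F ∧ f ⁻¹' F ⊆ Q) M) {z : G} (hz : z ∉ M) :
    ∃ c ∉ Q, hG.imp z (f c) ∈ M := by
  have hMF := hM.prop.1
  by_contra! h
  have hD : {x | hG.imp z x ∈ M} = M :=
    (hM.eq_of_subset ⟨hMF.setOf_imp_mem z, fun c hc => by_contra fun hcQ => h c hcQ hc⟩
      (hMF.subset_setOf_imp_mem z)).symm
  exact hz (hD ▸ hMF.mem_setOf_imp_mem_self z)

theorem subset_preimage_of_maximal (hf : hH.IsHom hG f) (hQ : hH.IsImplicativeFilter Q)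
    (hM : Maximal (fun F => hG.IsImplicativeFilter F ∧ f ⁻¹' F ⊆ Q) M) : Q ⊆ f ⁻¹' M := by
  intro q hq
  by_contra hqM
  obtain ⟨c, hcQ, hqc⟩ := exists_imp_mem_of_maximal hM hqM
  rw [← hf.2] at hqc
  exact hcQ (hQ.2 q c hq (hM.prop.2 hqc))

theorem isIrreducible_of_maximal (hf : hH.IsHom hG f) (hQ : hH.IsIrreducible Q)
    (hM : Maximal (fun F => hG.IsImplicativeFilter F ∧ f ⁻¹' F ⊆ Q) M) :
    hG.IsIrreducible M := by
  obtain ⟨hMF, hMQ⟩ := hM.prop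
  have hQM := subset_preimage_of_maximal hf hQ.1 hM
  refine ⟨hMF, fun hMuniv => ?_, fun F₁ F₂ hF₁ hF₂ heq => ?_⟩
  · obtain ⟨c, hc⟩ := (Set.ne_univ_iff_exists_notMem Q).1 hQ.2.1
    exact hc (hMQ (by simp [hMuniv]))
  by_contra! hne
  have hMF₁ : M ⊆ F₁ := heq ▸ Set.inter_subset_left
  have hMF₂ : M ⊆ F₂ := heq ▸ Set.inter_subset_right
  obtain ⟨a, haF₁, haM⟩ := Set.not_subset.1 fun h => hne.1 (hMF₁.antisymm h)
  obtain ⟨b, hbF₂, hbM⟩ := Set.not_subset.1 fun h => hne.2 (hMF₂.antisymm h)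
  obtain ⟨c₁, hc₁Q, hac₁⟩ := exists_imp_mem_of_maximal hM haM
  obtain ⟨c₂, hc₂Q, hbc₂⟩ := exists_imp_mem_of_maximal hM hbM
  obtain ⟨c, hcQ, hc₁c, hc₂c⟩ := hQ.exists_notMem_imp_mem_and_imp_mem hc₁Q hc₂Q
  have hfc₁ : hG.imp (f c₁) (f c) ∈ M := hf.2 c₁ c ▸ hQM hc₁c
  have hfc₂ : hG.imp (f c₂) (f c) ∈ M := hf.2 c₂ c ▸ hQM hc₂c
  have hcF₁ : f c ∈ F₁ := hF₁.2 a _ haF₁ (hMF₁ (hMF.imp_trans hac₁ hfc₁))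
  have hcF₂ : f c ∈ F₂ := hF₂.2 b _ hbF₂ (hMF₂ (hMF.imp_trans hbc₂ hfc₂))
  exact hcQ (hMQ (heq.symm.subset ⟨hcF₁, hcF₂⟩))

theorem IsHom.exists_isIrreducible_superset_preimage_eq (hf : hH.IsHom hG f) {P : Set G}
    (hP : hG.IsImplicativeFilter P) (hQ : hH.IsIrreducible Q) (hPQ : f ⁻¹' P ⊆ Q) :
    ∃ M, hG.IsIrreducible M ∧ P ⊆ M ∧ f ⁻¹' M = Q := by
  obtain ⟨M, hPM, hM⟩ := zorn_subset_nonempty {F | hG.IsImplicativeFilter F ∧ f ⁻¹' F ⊆ Q}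
    (fun C hC hchain hne => ⟨⋃₀ C,
      ⟨isImplicativeFilter_sUnion (fun F hF => (hC hF).1) hchain hne,
        by rw [Set.preimage_sUnion]; exact Set.iUnion₂_subset fun F hF => (hC hF).2⟩,
      fun _ => Set.subset_sUnion_of_mem⟩) P ⟨hP, hPQ⟩
  exact ⟨M, isIrreducible_of_maximal hf hQ hM, hPM,
    hM.prop.2.antisymm (subset_preimage_of_maximal hf hQ.1 hM)⟩

end Extension

end HilbertAlgebra

section Ghat

variable {H G : Type*} {hH : HilbertAlgebra H} {hG : HilbertAlgebra G} {f : H → G}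

theorem isUpsetX_ghat (U : Set (Set H)) : hG.IsUpsetX (ghat hH hG f U) :=
  ⟨fun _ hP => hP.1, fun _ _ ⟨_, hPU⟩ hP' hPP' =>
    ⟨hP', fun Q hQ hP'Q => hPU Q hQ ((Set.preimage_mono hPP').trans hP'Q)⟩⟩

theorem ghat_setOf_isIrreducible :
    ghat hH hG f {P | hH.IsIrreducible P} = {P | hG.IsIrreducible P} :=
  Set.ext fun _ => ⟨And.left, fun hP => ⟨hP, fun _ hQ _ => hQ⟩⟩

theorem ghat_inter (U V : Set (Set H)) :
    ghat hH hG f (U ∩ V) = ghat hH hG f U ∩ ghat hH hG f V :=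
  Set.ext fun _ =>
    ⟨fun ⟨hP, hPUV⟩ => ⟨⟨hP, fun Q hQ hPQ => (hPUV Q hQ hPQ).1⟩,
        ⟨hP, fun Q hQ hPQ => (hPUV Q hQ hPQ).2⟩⟩,
      fun ⟨⟨hP, hPU⟩, ⟨_, hPV⟩⟩ => ⟨hP, fun Q hQ hPQ => ⟨hPU Q hQ hPQ, hPV Q hQ hPQ⟩⟩⟩

theorem ghat_impUps (hf : hH.IsHom hG f) {U : Set (Set H)} (hU : hH.IsUpsetX U)
    (V : Set (Set H)) :
    ghat hH hG f (hH.impUps U V) = hG.impUps (ghat hH hG f U) (ghat hH hG f V) := by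
  ext P
  constructor
  · rintro ⟨hP, hPUV⟩
    refine ⟨hP, fun P' hP' hPP' ⟨_, hP'U⟩ => ⟨hP', fun Q hQ hP'Q => ?_⟩⟩
    exact (hPUV Q hQ ((Set.preimage_mono hPP').trans hP'Q)).2 Q hQ subset_rfl (hP'U Q hQ hP'Q)
  · rintro ⟨hP, hPUV⟩
    refine ⟨hP, fun Q hQ hPQ => ⟨hQ, fun R hR hQR hRU => ?_⟩⟩
    obtain ⟨M, hM, hPM, hMR⟩ :=
      hf.exists_isIrreducible_superset_preimage_eq hP.1 hR (hPQ.trans hQR)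
    have hMU : M ∈ ghat hH hG f U := ⟨hM, fun S hS hRS => hU.2 R S hRU hS (hMR ▸ hRS)⟩
    exact (hPUV M hM hPM hMU).2 R hR hMR.le

end Ghat

theorem stmt_7 {H G : Type*} (hH : HilbertAlgebra H) (hG : HilbertAlgebra G) (f : H → G)
    (hf : hH.IsHom hG f) :
    (∀ U : Set (Set H), hH.IsUpsetX U → hG.IsUpsetX (ghat hH hG f U)) ∧
    (ghat hH hG f {P | hH.IsIrreducible P} = {P | hG.IsIrreducible P}) ∧
    (∀ U V : Set (Set H), hH.IsUpsetX U → hH.IsUpsetX V →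
      ghat hH hG f (U ∩ V) = ghat hH hG f U ∩ ghat hH hG f V) ∧
    (∀ U V : Set (Set H), hH.IsUpsetX U → hH.IsUpsetX V →
      ghat hH hG f (hH.impUps U V) = hG.impUps (ghat hH hG f U) (ghat hH hG f V)) :=
  ⟨fun U _ => isUpsetX_ghat U, ghat_setOf_isIrreducible, fun U V _ _ => ghat_inter U V,
    fun _ V hU _ => ghat_impUps hf hU V⟩
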